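/- The weight function \hat{μ} on marked plane binary trees is invariant under π: \hat{μ}(π(\widehat{T})) = \hat{μ}(\widehat{T}) for all \widehat{T} ∈ \widehat{T}_n. -/
import Mathlib



/-- Plane binary trees: every internal vertex has exactly two ordered children. -/
inductive PTree where
  | leaf : PTree
  | node : PTree → PTree → PTree
  deriving DecidableEq

namespace PTree

/-- number of leaves (endpoints) -/
def numLeaves : PTree → ℕ
  | leaf => 1
  | node l r => numLeaves l + numLeaves r

/-- directions of the leaves of a subtree which is itself a `b`-child
(`true` = left child, `false` = right child), in left-to-right order. -/
def dirsAux : PTree → Bool → List Bool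
  | leaf, b => [b]
  | node l r, _ => dirsAux l true ++ dirsAux r false

/-- the left/right-child directions of all leaves of a tree, left to right
(`true` = left child, `false` = right child). -/
def dirs : PTree → List Bool
  | leaf => []
  | node l r => dirsAux l true ++ dirsAux r false

/-- The reduction map `R`: the directions of the 2nd through (n+1)-th leaves;
`true` = • (occupied site, left child), `false` = ∘ (empty site, right child). -/
def red (T : PTree) : List Bool := ((dirs T).drop 1).dropLast

/-- number of internal vertices on the path from the leftmost leaf to the root
(root included). -/
def lCount : PTree → ℕ
  | leaf => 0
  | node l _ => lCount l + 1

/-- number of internal vertices on the path from the rightmost leaf to the root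
(root included). -/
def rCount : PTree → ℕ
  | leaf => 0
  | node _ r => rCount r + 1

/-- number of last branching vertices (internal vertices whose two children are leaves). -/
def lbCount : PTree → ℕ
  | leaf => 0
  | node leaf leaf => 1
  | node l r => lbCount l + lbCount r

end PTree

/-- Marked plane binary trees: a plane binary tree with exactly one of its
last branching vertices marked (the constructor `mark` is the marked vertex,
a vertex with two leaf children). -/
inductive MTree where
  | mark : MTree
  | nodeL : MTree → PTree → MTree
  | nodeR : PTree → MTree → MTree
  deriving DecidableEq

namespace MTree

/-- forgetful map to plane binary trees -/
def forget : MTree → PTree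
  | mark => .node .leaf .leaf
  | nodeL l r => .node (forget l) r
  | nodeR l r => .node l (forget r)

/-- collapse the marked vertex (with its two leaf children) to a single leaf. -/
def collapseT : MTree → PTree
  | mark => .leaf
  | nodeL l r => .node (collapseT l) r
  | nodeR l r => .node l (collapseT r)

/-- index (left to right, starting from 0) of the leaf of `collapseT` obtained
by collapsing the marked vertex. -/
def markIdx : MTree → ℕ
  | mark => 0
  | nodeL l _ => markIdx l
  | nodeR l r => l.numLeaves + markIdx r

end MTree

/-- replace the `i`-th leaf of a tree by a marked last branching vertex. -/
def expand : PTree → ℕ → MTree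
  | .leaf, _ => .mark
  | .node l r, i =>
      if i < l.numLeaves then .nodeL (expand l i) r
      else .nodeR l (expand r (i - l.numLeaves))

/-- index of the next right-child (`false`) leaf strictly after position `i`;
if there is none, the index of the rightmost left-child (`true`) leaf. -/
def nextFalseIdx (w : List Bool) (i : ℕ) : ℕ :=
  if (w.drop (i+1)).findIdx (fun b => !b) < (w.drop (i+1)).length
  then i + 1 + (w.drop (i+1)).findIdx (fun b => !b)
  else w.length - 1 - (w.reverse.findIdx (fun b => b))

/-- index of the closest left-child (`true`) leaf strictly before position `i`;
if there is none, the index of the leftmost right-child (`false`) leaf. -/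
def prevTrueIdx (w : List Bool) (i : ℕ) : ℕ :=
  if ((w.take i).reverse).findIdx (fun b => b) < i
  then i - 1 - ((w.take i).reverse).findIdx (fun b => b)
  else w.findIdx (fun b => !b)

/-- position of the leaf where the removed segment is re-glued by `π`. -/
def target (w : List Bool) (i : ℕ) : ℕ :=
  if w.getD i true then prevTrueIdx w i else nextFalseIdx w i

/-- The map `π` on marked trees: remove the segment joining the marked vertex to
its left (resp. right) leaf when the marked vertex is a right (resp. left) child,
and glue it to the next right- (resp. left-) child leaf to the right (resp. left),
with the boundary rule when no such leaf exists; the new vertex is marked. -/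
def piM (M : MTree) : MTree :=
  expand M.collapseT (target M.collapseT.dirs M.markIdx)

open Classical in
/-- Transition rates of the `n`-site open-boundary TASEP, on configurations
encoded as lists of booleans (`true` = •, `false` = ∘). -/
noncomputable def rate (α β : ℝ) (C C' : List Bool) : ℝ :=
  if ∃ A, C = false :: A ∧ C' = true :: A then α
  else if ∃ A, C = A ++ [true] ∧ C' = A ++ [false] then β
  else if ∃ A A', C = A ++ true :: false :: A' ∧ C' = A ++ false :: true :: A' then 1
  else 0

/-- number of active bonds of a configuration: injection at site 1 if empty,
extraction at site n if occupied, and hops across •∘ pairs. -/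
def activeCount (C : List Bool) : ℕ :=
  (if C.head? = some false then 1 else 0) +
  ((C.zip C.tail).count (true, false)) +
  (if C.getLast? = some true then 1 else 0)

/-- the weight `μ(T) = α^{-l(T)} β^{-r(T)}` of a plane binary tree. -/
noncomputable def mu (α β : ℝ) (T : PTree) : ℝ :=
  α ^ (-(T.lCount : ℤ)) * β ^ (-(T.rCount : ℤ))

/-- number of internal vertices on the path from the leftmost leaf to the root,
excluding the marked vertex. -/
def lCountM : MTree → ℕ
  | .mark => 0
  | .nodeL l _ => lCountM l + 1
  | .nodeR l _ => l.lCount + 1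

/-- number of internal vertices on the path from the rightmost leaf to the root,
excluding the marked vertex. -/
def rCountM : MTree → ℕ
  | .mark => 0
  | .nodeR _ r => rCountM r + 1
  | .nodeL _ r => r.rCount + 1

/-- the weight `μ̂` of a marked tree, excluding the marked vertex from the counts. -/
noncomputable def muHat (α β : ℝ) (M : MTree) : ℝ :=
  α ^ (-(lCountM M : ℤ)) * β ^ (-(rCountM M : ℤ))


lemma lCountM_expand (T : PTree) (i : ℕ) : lCountM (expand T i) = T.lCount := by
  induction T generalizing i with
  | leaf => rfl
  | node l r ihl ihr =>
    unfold expand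
    split <;> simp [lCountM, PTree.lCount, ihl]

lemma rCountM_expand (T : PTree) (i : ℕ) : rCountM (expand T i) = T.rCount := by
  induction T generalizing i with
  | leaf => rfl
  | node l r ihl ihr =>
    unfold expand
    split <;> simp [rCountM, PTree.rCount, ihr]

lemma lCountM_collapse (M : MTree) : lCountM M = M.collapseT.lCount := by
  induction M with
  | mark => rfl
  | nodeL l r ih => simp [lCountM, MTree.collapseT, PTree.lCount, ih]
  | nodeR l r ih => simp [lCountM, MTree.collapseT, PTree.lCount]

lemma rCountM_collapse (M : MTree) : rCountM M = M.collapseT.rCount := by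
  induction M with
  | mark => rfl
  | nodeL l r ih => simp [rCountM, MTree.collapseT, PTree.rCount]
  | nodeR l r ih => simp [rCountM, MTree.collapseT, PTree.rCount, ih]

lemma collapseT_expand (T : PTree) (i : ℕ) : (expand T i).collapseT = T := by
  induction T generalizing i with
  | leaf => rfl
  | node l r ihl ihr =>
    unfold expand
    split <;> simp [MTree.collapseT, ihl, ihr]

/-- the weight `μ̂` on marked trees is invariant under `π`. -/
theorem muHat_pi_invariant (α β : ℝ) (hα : 0 < α) (hβ : 0 < β) (M : MTree) :
    muHat α β (piM M) = muHat α β M := by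
  unfold muHat piM
  rw [lCountM_expand, rCountM_expand, lCountM_collapse M, rCountM_collapse M]
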